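/- (Perturbing the differential of a convolution) Let E₁, …, E_m be cochain complexes over an additive category and let M be a cochain complex with degree-n object ⊕_{i=1}^m Eᵢⁿ and lower-triangular differential d: diagonal components d_{Eᵢ} and components d_{ij} : Eⱼⁿ → Eᵢⁿ⁺¹ for i > j. Fix k ≥ 1 and suppose that for each i with i + k ≤ m we are given a degree-1 graded map φᵢ : Eᵢ → E_{i+k} such that d_{i+k,i} − φᵢ is a coboundary in the Hom complex HOM(Eᵢ, E_{i+k}). Then M is isomorphic, as a cochain complex, to a complex M' with the same underlying graded object and a lower-triangular differential d' such that d'_{ij} = d_{ij} whenever 0 ≤ i − j < k and d'_{i+k,i} = φᵢ for all i; that is, the length-k components of the differential may be replaced by the φᵢ at the expense of changing only the components of length greater than k. -/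

import Mathlib

open CategoryTheory CategoryTheory.Limits CochainComplex CochainComplex.HomComplex

/-- The degree `+1` endomorphism of the graded object `n ↦ ⊕ᵢ Eᵢⁿ` which is lower triangular,
with the differentials of the `Eᵢ` on the diagonal and the degree-one graded maps
`dc i j : Eⱼ → Eᵢ` (for `j < i`) below the diagonal. -/
noncomputable def convTotalD {C : Type*} [Category C] [Preadditive C] [HasFiniteBiproducts C]
    {m : ℕ} (E : Fin m → CochainComplex C ℤ)
    (dc : ∀ i j : Fin m, j < i → Cochain (E j) (E i) 1) (n : ℤ) :
    (⨁ fun i => (E i).X n) ⟶ (⨁ fun i => (E i).X (n + 1)) :=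
  biproduct.matrix fun j i =>
    if hji : j = i then (E j).d n (n + 1) ≫ eqToHom (congrArg (fun k => (E k).X (n + 1)) hji)
    else if hlt : j < i then (dc i j hlt).v n (n + 1) rfl
    else 0

/-!
Let `V` be the graded endomorphism of `⨁ Eᵢ` whose only nonzero components are the homotopies
`w : Eᵢ → E_{i+k}` with `d_{i+k,i} - φᵢ = δ w`. It has length `k ≥ 1`, hence is nilpotent, so
`1 - V` is an automorphism with inverse `∑ Vᵖ = 1 + V + (length ≥ 2k)`. Conjugating by it gives
an isomorphic complex with differential `(1 - V) ≫ d ≫ ∑ Vᵖ`, which agrees with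
`d - V ≫ d + d ≫ V` up to components of length `> k`. As `V ≫ d` and `d ≫ V` have length `≥ k`,
components of length `< k` are unchanged, and those of length `k` become
`d_{i+k,i} - w ≫ d + d ≫ w = d_{i+k,i} - δ w = φᵢ`.
-/

namespace CochainComplex

variable {V : Type*} [Category V] [HasZeroMorphisms V]
  {α : Type*} [AddRightCancelSemigroup α] [One α]
  {X Y : α → V} (e : ∀ n, X n ≅ Y n) (d : ∀ n, X n ⟶ X (n + 1))

noncomputable def conjD (n : α) : Y n ⟶ Y (n + 1) :=
  (e n).inv ≫ d n ≫ (e (n + 1)).hom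

lemma conjD_comp_conjD (sq : ∀ n, d n ≫ d (n + 1) = 0) (n : α) :
    conjD e d n ≫ conjD e d (n + 1) = 0 := by
  simp [conjD, reassoc_of% (sq n)]

noncomputable def isoOfConjD [DecidableEq α] (sq : ∀ n, d n ≫ d (n + 1) = 0)
    {d' : ∀ n, Y n ⟶ Y (n + 1)} (sq' : ∀ n, d' n ≫ d' (n + 1) = 0)
    (h : ∀ n, conjD e d n = d' n) : of X d sq ≅ of Y d' sq' :=
  HomologicalComplex.Hom.isoOfComponents e (by rintro n _ rfl; simp [← h, conjD])

end CochainComplex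

namespace CategoryTheory.Limits.biproduct

variable {C : Type*} [Category C] [Preadditive C] [HasFiniteBiproducts C]

section Components

variable {J : Type} [Fintype J] {X Y Z : J → C}

lemma hom_ext_components {f g : ⨁ X ⟶ ⨁ Y}
    (h : ∀ j i, components f j i = components g j i) : f = g :=
  matrixEquiv.injective (funext₂ h)

@[simp]
lemma components_add (f g : ⨁ X ⟶ ⨁ Y) (j i : J) :
    components (f + g) j i = components f j i + components g j i := by
  simp [components]

@[simp]
lemma components_sub (f g : ⨁ X ⟶ ⨁ Y) (j i : J) :
    components (f - g) j i = components f j i - components g j i := by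
  simp [components]

@[simp]
lemma components_sum {ι : Type*} (s : Finset ι) (f : ι → (⨁ X ⟶ ⨁ Y)) (j i : J) :
    components (∑ p ∈ s, f p) j i = ∑ p ∈ s, components (f p) j i := by
  simp [components, Preadditive.sum_comp, Preadditive.comp_sum]

@[simp]
lemma components_zero (j i : J) : components (0 : ⨁ X ⟶ ⨁ Y) j i = 0 := by
  simp [components]

lemma components_id_of_ne {j i : J} (h : j ≠ i) : components (𝟙 (⨁ X)) j i = 0 := by
  simp [components, biproduct.ι_π_ne _ h]

lemma components_comp (f : ⨁ X ⟶ ⨁ Y) (g : ⨁ Y ⟶ ⨁ Z) (j i : J) :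
    components (f ≫ g) j i = ∑ l, components f j l ≫ components g l i := by
  have h : f ≫ g = f ≫ (∑ l, π Y l ≫ ι Y l) ≫ g := by rw [biproduct.total, Category.id_comp]
  rw [components, h]
  simp only [components, Preadditive.sum_comp, Preadditive.comp_sum, Category.assoc]

end Components

end CategoryTheory.Limits.biproduct

lemma CochainComplex.HomComplex.δ_zero_one_v {C : Type*} [Category C] [Preadditive C]
    {F G : CochainComplex C ℤ} (w : Cochain F G 0) (p : ℤ) :
    (δ 0 1 w).v p (p + 1) rfl =
      w.v p p (add_zero p) ≫ G.d p (p + 1) - F.d p (p + 1) ≫ w.v (p + 1) (p + 1) (add_zero _) := by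
  rw [δ_v 0 1 rfl w p (p + 1) rfl p (p + 1) (by omega) rfl, Int.negOnePow_one, Units.neg_smul,
    one_smul, ← sub_eq_add_neg]

namespace Convolution

open biproduct

variable {C : Type*} [Category C] [Preadditive C] [HasFiniteBiproducts C] {m : ℕ}

section Length

variable {X Y Z : Fin m → C}

def LengthAtLeast (r : ℕ) (f : ⨁ X ⟶ ⨁ Y) : Prop :=
  ∀ j i : Fin m, (i : ℕ) < j + r → components f j i = 0

namespace LengthAtLeast

variable {r s : ℕ} {f g : ⨁ X ⟶ ⨁ Y}

lemma mono (hrs : r ≤ s) (hf : LengthAtLeast s f) : LengthAtLeast r f :=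
  fun j i h => hf j i (by omega)

lemma sub (hf : LengthAtLeast r f) (hg : LengthAtLeast r g) : LengthAtLeast r (f - g) :=
  fun j i h => by rw [components_sub, hf j i h, hg j i h, sub_zero]

lemma sum {ι : Type*} {s : Finset ι} {f : ι → (⨁ X ⟶ ⨁ Y)}
    (hf : ∀ p ∈ s, LengthAtLeast r (f p)) : LengthAtLeast r (∑ p ∈ s, f p) :=
  fun j i h => by rw [components_sum]; exact Finset.sum_eq_zero fun p hp => hf p hp j i h

lemma comp {g : ⨁ Y ⟶ ⨁ Z} (hf : LengthAtLeast r f) (hg : LengthAtLeast s g) :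
    LengthAtLeast (r + s) (f ≫ g) := by
  intro j i h
  rw [components_comp]
  refine Finset.sum_eq_zero fun l _ => ?_
  by_cases hl : (l : ℕ) < j + r
  · rw [hf j l hl, zero_comp]
  · rw [hg l i (by omega), comp_zero]

lemma components_comp_of_add_eq {g : ⨁ Y ⟶ ⨁ Z} (hf : LengthAtLeast r f)
    (hg : LengthAtLeast s g) {j l i : Fin m} (hl : (l : ℕ) = j + r) (hi : (i : ℕ) = l + s) :
    components (f ≫ g) j i = components f j l ≫ components g l i := by
  rw [components_comp, Finset.sum_eq_single l]
  · intro l' _ hl'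
    rcases Nat.lt_or_gt_of_ne (Fin.val_ne_of_ne hl') with h | h
    · rw [hf j l' (by omega), zero_comp]
    · rw [hg l' i (by omega), comp_zero]
  · simp

lemma eq_zero (hr : m ≤ r) (hf : LengthAtLeast r f) : f = 0 :=
  hom_ext_components fun j i => by rw [components_zero]; exact hf j i (by omega)

end LengthAtLeast

lemma lengthAtLeast_id : LengthAtLeast 0 (𝟙 (⨁ X)) :=
  fun _ _ h => components_id_of_ne (fun hji => by subst hji; omega)

lemma LengthAtLeast.pow {k : ℕ} {V : ⨁ X ⟶ ⨁ X} (hV : LengthAtLeast k V) (p : ℕ) :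
    LengthAtLeast (p * k) (End.of V ^ p) := by
  induction p with
  | zero => simpa using lengthAtLeast_id
  | succ p ih =>
    rw [pow_succ, End.mul_def, add_mul, one_mul, add_comm]
    exact hV.comp ih

lemma LengthAtLeast.pow_eq_zero {k : ℕ} (hk : 1 ≤ k) {V : ⨁ X ⟶ ⨁ X}
    (hV : LengthAtLeast k V) : End.of V ^ m = 0 :=
  (hV.pow m).eq_zero (Nat.le_mul_of_pos_right m hk)

end Length

section Unipotent

variable {X Y : Fin m → C} {k : ℕ}

noncomputable def unipotentIso (hk : 1 ≤ k) {V : ⨁ X ⟶ ⨁ X} (hV : LengthAtLeast k V) :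
    ⨁ X ≅ ⨁ X where
  hom := 𝟙 _ - V
  inv := ∑ p ∈ Finset.range m, End.of V ^ p
  hom_inv_id := by
    have h := geom_sum_mul_neg (End.of V) m
    rwa [hV.pow_eq_zero hk, sub_zero] at h
  inv_hom_id := by
    have h := mul_neg_geom_sum (End.of V) m
    rwa [hV.pow_eq_zero hk, sub_zero] at h

variable (hk : 1 ≤ k) {V : ⨁ X ⟶ ⨁ X} (hV : LengthAtLeast k V)

lemma unipotentIso_hom : (unipotentIso hk hV).hom = 𝟙 _ - V := rfl

lemma unipotentIso_inv : (unipotentIso hk hV).inv = ∑ p ∈ Finset.range m, End.of V ^ p := rfl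

lemma lengthAtLeast_unipotentIso_inv : LengthAtLeast 0 (unipotentIso hk hV).inv := by
  rw [unipotentIso_inv]
  exact .sum fun p _ => (hV.pow p).mono (Nat.zero_le _)

lemma unipotentIso_inv_eq :
    (unipotentIso hk hV).inv = 𝟙 _ + V + V ≫ V ≫ (unipotentIso hk hV).inv := by
  set β := (unipotentIso hk hV).inv
  have h : β = 𝟙 _ + V ≫ β := by
    have := (unipotentIso hk hV).hom_inv_id
    rwa [unipotentIso_hom, Preadditive.sub_comp, Category.id_comp, sub_eq_iff_eq_add] at this
  calc β = 𝟙 _ + V ≫ (𝟙 _ + V ≫ β) := by rw [← h, ← h]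
    _ = 𝟙 _ + V + V ≫ V ≫ β := by rw [Preadditive.comp_add, Category.comp_id, add_assoc]

variable {V' : ⨁ Y ⟶ ⨁ Y} (hV' : LengthAtLeast k V') {d : ⨁ X ⟶ ⨁ Y} (hd : LengthAtLeast 0 d)
include hd

lemma lengthAtLeast_unipotent_conj_sub : LengthAtLeast (k + 1)
    ((unipotentIso hk hV).hom ≫ d ≫ (unipotentIso hk hV').inv - (d - V ≫ d + d ≫ V')) := by
  have hβ := unipotentIso_inv_eq hk hV'
  have hβ₀ := lengthAtLeast_unipotentIso_inv hk hV'
  set β := (unipotentIso hk hV').inv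
  have expand : (unipotentIso hk hV).hom ≫ d ≫ β - (d - V ≫ d + d ≫ V') =
      d ≫ V' ≫ V' ≫ β - V ≫ d ≫ V' - V ≫ d ≫ V' ≫ V' ≫ β := by
    nth_rw 1 [hβ]
    simp only [unipotentIso_hom, Preadditive.comp_add, Preadditive.sub_comp, Category.id_comp,
      Category.comp_id]
    abel
  rw [expand]
  refine .sub (.sub ?_ ?_) ?_
  · exact (hd.comp (hV'.comp (hV'.comp hβ₀))).mono (by omega)
  · exact (hV.comp (hd.comp hV')).mono (by omega)
  · exact (hV.comp (hd.comp (hV'.comp (hV'.comp hβ₀)))).mono (by omega)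

lemma components_unipotent_conj_of_lt {j i : Fin m} (h : (i : ℕ) < j + k) :
    components ((unipotentIso hk hV).hom ≫ d ≫ (unipotentIso hk hV').inv) j i =
      components d j i := by
  have := lengthAtLeast_unipotent_conj_sub hk hV hV' hd j i (by omega)
  rw [components_sub, sub_eq_zero, components_add, components_sub,
    (hV.comp hd) j i (by omega), (hd.comp hV') j i (by omega)] at this
  simpa using this

lemma components_unipotent_conj_of_eq_add {j i : Fin m} (h : (i : ℕ) = j + k) :
    components ((unipotentIso hk hV).hom ≫ d ≫ (unipotentIso hk hV').inv) j i =
      components d j i - components V j i ≫ components d i i +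
        components d j j ≫ components V' j i := by
  have := lengthAtLeast_unipotent_conj_sub hk hV hV' hd j i (by omega)
  rwa [components_sub, sub_eq_zero, components_add, components_sub,
    hV.components_comp_of_add_eq hd h (add_zero _).symm,
    hd.components_comp_of_add_eq hV' (add_zero _) h] at this

end Unipotent

section TotalDifferential

variable (E : Fin m → CochainComplex C ℤ) (dc : ∀ i j : Fin m, j < i → Cochain (E j) (E i) 1)
  (n : ℤ)

lemma components_convTotalD_self (i : Fin m) :
    components (convTotalD E dc n) i i = (E i).d n (n + 1) := by
  simp [convTotalD]

lemma components_convTotalD_of_lt {i j : Fin m} (h : j < i) :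
    components (convTotalD E dc n) j i = (dc i j h).v n (n + 1) rfl := by
  simp [convTotalD, h.ne, h]

lemma lengthAtLeast_convTotalD : LengthAtLeast 0 (convTotalD E dc n) := by
  intro j i h
  simp [convTotalD, Fin.ne_of_gt (Fin.lt_def.2 h), not_lt.2 (Fin.le_def.2 h.le)]

end TotalDifferential

section CochainOfComponents

variable (E : Fin m → CochainComplex C ℤ)
  (f : ∀ n, (⨁ fun i => (E i).X n) ⟶ ⨁ fun i => (E i).X (n + 1))

noncomputable def cochainOfComponents (i j : Fin m) : Cochain (E j) (E i) 1 :=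
  Cochain.mk fun p q hpq => components (f p) j i ≫ eqToHom (by rw [← hpq])

lemma cochainOfComponents_eq {i j : Fin m} {z : Cochain (E j) (E i) 1}
    (h : ∀ n, components (f n) j i = z.v n (n + 1) rfl) : cochainOfComponents E f i j = z := by
  ext p q hpq
  obtain rfl : q = p + 1 := hpq.symm
  simp [cochainOfComponents, h]

lemma convTotalD_cochainOfComponents (hf : ∀ n, LengthAtLeast 0 (f n))
    (hdiag : ∀ n i, components (f n) i i = (E i).d n (n + 1)) (n : ℤ) :
    convTotalD E (fun i j _ => cochainOfComponents E f i j) n = f n := by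
  refine hom_ext_components fun j i => ?_
  rcases lt_trichotomy j i with h | rfl | h
  · simp [components_convTotalD_of_lt E _ n h, cochainOfComponents]
  · rw [components_convTotalD_self, hdiag]
  · rw [lengthAtLeast_convTotalD E _ n j i (by simpa using h), hf n j i (by simpa using h)]

end CochainOfComponents

section Perturbation

variable (E : Fin m → CochainComplex C ℤ) {k : ℕ}
  (W : ∀ i j : Fin m, (j : ℕ) + k = i → Cochain (E j) (E i) 0)

noncomputable def subdiagonalMatrix (n : ℤ) :
    (⨁ fun i => (E i).X n) ⟶ ⨁ fun i => (E i).X n :=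
  biproduct.matrix fun j i => if h : (j : ℕ) + k = i then (W i j h).v n n (add_zero n) else 0

lemma lengthAtLeast_subdiagonalMatrix (n : ℤ) : LengthAtLeast k (subdiagonalMatrix E W n) :=
  fun j i h => by simp [subdiagonalMatrix, show (j : ℕ) + k ≠ i by omega]

lemma components_subdiagonalMatrix (n : ℤ) {i j : Fin m} (h : (j : ℕ) + k = i) :
    components (subdiagonalMatrix E W n) j i = (W i j h).v n n (add_zero n) := by
  simp [subdiagonalMatrix, h]

variable (hk : 1 ≤ k)

noncomputable def perturbationIso (n : ℤ) : (⨁ fun i => (E i).X n) ≅ ⨁ fun i => (E i).X n :=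
  (unipotentIso hk (lengthAtLeast_subdiagonalMatrix E W n)).symm

variable (dc : ∀ i j : Fin m, j < i → Cochain (E j) (E i) 1)

noncomputable def perturbedD : ∀ n : ℤ,
    (⨁ fun i => (E i).X n) ⟶ ⨁ fun i => (E i).X (n + 1) :=
  conjD (perturbationIso E W hk) (convTotalD E dc)

variable (n : ℤ)

lemma components_perturbedD_of_lt {j i : Fin m} (h : (i : ℕ) < j + k) :
    components (perturbedD E W hk dc n) j i =
      components (convTotalD E dc n) j i :=
  components_unipotent_conj_of_lt hk (lengthAtLeast_subdiagonalMatrix E W n)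
    (lengthAtLeast_subdiagonalMatrix E W (n + 1)) (lengthAtLeast_convTotalD E dc n) h

lemma components_perturbedD_of_eq_add {j i : Fin m} (hji : j < i) (h : (j : ℕ) + k = i) :
    components (perturbedD E W hk dc n) j i =
      (dc i j hji).v n (n + 1) rfl - (W i j h).v n n (add_zero n) ≫ (E i).d n (n + 1) +
        (E j).d n (n + 1) ≫ (W i j h).v (n + 1) (n + 1) (add_zero _) := by
  rw [perturbedD, conjD, perturbationIso, perturbationIso, Iso.symm_inv, Iso.symm_hom,
    components_unipotent_conj_of_eq_add hk (lengthAtLeast_subdiagonalMatrix E W n)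
      (lengthAtLeast_subdiagonalMatrix E W (n + 1)) (lengthAtLeast_convTotalD E dc n) h.symm,
    components_convTotalD_of_lt E dc n hji, components_convTotalD_self, components_convTotalD_self,
    components_subdiagonalMatrix E W n h, components_subdiagonalMatrix E W (n + 1) h]

lemma convTotalD_cochainOfComponents_perturbedD :
    convTotalD E (fun i j _ => cochainOfComponents E (perturbedD E W hk dc) i j) n =
      perturbedD E W hk dc n := by
  refine convTotalD_cochainOfComponents E _ (fun n j i h => ?_) (fun n i => ?_) n
  · rw [components_perturbedD_of_lt E W hk dc n (by omega),
      lengthAtLeast_convTotalD E dc n j i h]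
  · rw [components_perturbedD_of_lt E W hk dc n (by omega),
      components_convTotalD_self]

end Perturbation

end Convolution

/-- Perturbing the differential of a convolution: if `M` is a convolution on `E₁, …, E_m` and,
for a fixed `k ≥ 1`, each length-`k` component `d_{i+k,i}` of its differential differs from a
prescribed degree-one graded map `φ` by a coboundary in the Hom complex, then `M` is isomorphic
to a convolution whose components of length `< k` agree with those of `M` and whose length-`k`
components are the prescribed maps `φ`. -/
theorem convolution_perturb_differential
    {C : Type*} [Category C] [Preadditive C] [HasFiniteBiproducts C]
    {m : ℕ} (E : Fin m → CochainComplex C ℤ)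
    (dcM : ∀ i j : Fin m, j < i → Cochain (E j) (E i) 1)
    (sqM : ∀ n, convTotalD E dcM n ≫ convTotalD E dcM (n + 1) = 0)
    (k : ℕ) (hk : 1 ≤ k)
    (φ : ∀ i j : Fin m, j < i → (j : ℕ) + k = (i : ℕ) → Cochain (E j) (E i) 1)
    (hφ : ∀ (i j : Fin m) (hji : j < i) (hjk : (j : ℕ) + k = (i : ℕ)),
      ∃ w : Cochain (E j) (E i) 0, dcM i j hji - φ i j hji hjk = δ 0 1 w) :
    ∃ (dcN : ∀ i j : Fin m, j < i → Cochain (E j) (E i) 1)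
      (sqN : ∀ n, convTotalD E dcN n ≫ convTotalD E dcN (n + 1) = 0),
      (∀ (i j : Fin m) (hji : j < i), (i : ℕ) - (j : ℕ) < k → dcN i j hji = dcM i j hji) ∧
      (∀ (i j : Fin m) (hji : j < i) (hjk : (j : ℕ) + k = (i : ℕ)),
        dcN i j hji = φ i j hji hjk) ∧
      Nonempty ((CochainComplex.of (fun n => ⨁ fun i => (E i).X n) (convTotalD E dcM) sqM) ≅
        (CochainComplex.of (fun n => ⨁ fun i => (E i).X n) (convTotalD E dcN) sqN)) := by
  open Convolution in
  choose w hw using hφ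
  let W : ∀ i j : Fin m, (j : ℕ) + k = i → Cochain (E j) (E i) 0 :=
    fun i j h => w i j (Fin.lt_def.2 (by omega)) h
  set D := perturbedD E W hk dcM
  have hD := convTotalD_cochainOfComponents_perturbedD E W hk dcM
  refine ⟨fun i j _ => cochainOfComponents E D i j, fun n => ?_, fun i j hji h => ?_,
    fun i j hji hjk => ?_, ⟨isoOfConjD _ _ sqM _ fun n => (hD n).symm⟩⟩
  · rw [hD, hD]
    exact conjD_comp_conjD _ _ sqM n
  · refine cochainOfComponents_eq E D fun n => ?_
    rw [components_perturbedD_of_lt E W hk dcM n (j := j) (i := i) (by omega),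
      components_convTotalD_of_lt E dcM n hji]
  · refine cochainOfComponents_eq E D fun n => ?_
    have hδ := Cochain.congr_v (hw i j hji hjk) n (n + 1) rfl
    rw [Cochain.sub_v, δ_zero_one_v] at hδ
    rw [components_perturbedD_of_eq_add E W hk dcM n hji hjk, ← sub_eq_zero,
      ← sub_eq_zero.2 hδ]
    abel
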